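/- For integers s ≥ 4, the polynomial 1 − z² − z³ − ε z^{s−2}(1 + z − z³) with ε = −1, i.e. 1 − z² − z³ + z^{s−2} + z^{s−1} − z^{s+1}, has exactly one real zero τ_s > 1 when s is suitably large, and τ_s converges to θ₀ as s → ∞, where θ₀ > 1 is the real root of z³ − z − 1. -/

import Mathlib

open Real Filter Set

private lemma d_pos {θ x : ℝ} (hθa : 1.3 < θ) (hθc : θ^3 = θ + 1)
    (hx : 0.99 < x) (hxθ : x < θ) : 0 < 1 + x - x^3 := by
  nlinarith [mul_pos (sub_pos.mpr hxθ) (show (0:ℝ) < θ^2 + θ*x + x^2 - 1 by nlinarith)]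

private lemma psi2_pos {c x : ℝ} (hc : 158 ≤ c) (hx1 : 1 < x) (hx2 : x < 1.4)
    (hd : 0 < 1 + x - x^3) :
    0 < ((6*x+2)*(x^3+x^2-1) - (3*x^2+2*x)^2)/(x^3+x^2-1)^2
      - ((-6*x)*(1+x-x^3) - (1-3*x^2)^2)/(1+x-x^3)^2 + c/x^2 := by
  have hn : 1 < x^3+x^2-1 := by nlinarith
  have hQ : ((-6*x)*(1+x-x^3) - (1-3*x^2)^2)/(1+x-x^3)^2 ≤ 0 := by
    apply div_nonpos_of_nonpos_of_nonneg
    · nlinarith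
    · positivity
  have hT1 : -76 ≤ ((6*x+2)*(x^3+x^2-1) - (3*x^2+2*x)^2)/(x^3+x^2-1)^2 := by
    rw [le_div_iff₀ (by positivity)]
    nlinarith [sq_nonneg (x^3+x^2-1), sq_nonneg x]
  have hT3 : (79:ℝ) ≤ c/x^2 := by
    rw [le_div_iff₀ (by positivity)]
    nlinarith
  linarith

private lemma hasDeriv1 (c x : ℝ) (hx : 0 < x) (hn : 0 < x^3+x^2-1) (hd : 0 < 1+x-x^3) :
    HasDerivAt (fun z => Real.log (z^3+z^2-1) - Real.log (1+z-z^3) - c * Real.log z)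
      ((3*x^2+2*x)/(x^3+x^2-1) - (1-3*x^2)/(1+x-x^3) - c/x) x := by
  have h1 : HasDerivAt (fun z : ℝ => z^3+z^2-1) (3*x^2+2*x) x := by
    have := ((hasDerivAt_pow 3 x).add (hasDerivAt_pow 2 x)).sub_const 1
    refine this.congr_deriv ?_
    push_cast; ring
  have h2 : HasDerivAt (fun z : ℝ => 1+z-z^3) (1-3*x^2) x := by
    have := ((hasDerivAt_const x (1:ℝ)).add (hasDerivAt_id x)).sub (hasDerivAt_pow 3 x)
    refine this.congr_deriv ?_
    push_cast; ring
  have := ((h1.log hn.ne').sub (h2.log hd.ne')).sub ((Real.hasDerivAt_log hx.ne').const_mul c)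
  refine this.congr_deriv ?_
  ring

private lemma hasDeriv2 (c x : ℝ) (hx : 0 < x) (hn : 0 < x^3+x^2-1) (hd : 0 < 1+x-x^3) :
    HasDerivAt (fun z => (3*z^2+2*z)/(z^3+z^2-1) - (1-3*z^2)/(1+z-z^3) - c/z)
      (((6*x+2)*(x^3+x^2-1) - (3*x^2+2*x)^2)/(x^3+x^2-1)^2
        - ((-6*x)*(1+x-x^3) - (1-3*x^2)^2)/(1+x-x^3)^2 + c/x^2) x := by
  have h1 : HasDerivAt (fun z : ℝ => z^3+z^2-1) (3*x^2+2*x) x := by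
    have := ((hasDerivAt_pow 3 x).add (hasDerivAt_pow 2 x)).sub_const 1
    refine this.congr_deriv ?_; push_cast; ring
  have h2 : HasDerivAt (fun z : ℝ => 1+z-z^3) (1-3*x^2) x := by
    have := ((hasDerivAt_const x (1:ℝ)).add (hasDerivAt_id x)).sub (hasDerivAt_pow 3 x)
    refine this.congr_deriv ?_; push_cast; ring
  have h1' : HasDerivAt (fun z : ℝ => 3*z^2+2*z) (6*x+2) x := by
    have := ((hasDerivAt_pow 2 x).const_mul 3).add ((hasDerivAt_id x).const_mul 2)
    refine this.congr_deriv ?_; push_cast; ring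
  have h2' : HasDerivAt (fun z : ℝ => 1-3*z^2) (-6*x) x := by
    have := (hasDerivAt_const x (1:ℝ)).sub ((hasDerivAt_pow 2 x).const_mul 3)
    refine this.congr_deriv ?_; push_cast; ring
  have q1 := h1'.div h1 hn.ne'
  have q2 := h2'.div h2 hd.ne'
  have q3 := (hasDerivAt_const x c).div (hasDerivAt_id x) hx.ne'
  have := (q1.sub q2).sub q3
  refine this.congr_deriv ?_
  have hx' : x ≠ 0 := hx.ne'
  simp only [id]
  field_simp
  ring

private lemma at_most_one {θ : ℝ} (hθa : 1.3 < θ) (hθb : θ < 1.4) (hθc : θ^3 = θ+1)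
    {c : ℝ} (hc : 158 ≤ c) {x y : ℝ} (hx1 : 1 < x) (hxy : x < y) (hyθ : y < θ)
    (hψx : Real.log (x^3+x^2-1) - Real.log (1+x-x^3) - c * Real.log x = 0)
    (hψy : Real.log (y^3+y^2-1) - Real.log (1+y-y^3) - c * Real.log y = 0) : False := by
  set f1 : ℝ → ℝ := fun z => Real.log (z^3+z^2-1) - Real.log (1+z-z^3) - c * Real.log z with hf1def
  set f2 : ℝ → ℝ := fun z => (3*z^2+2*z)/(z^3+z^2-1) - (1-3*z^2)/(1+z-z^3) - c/z with hf2def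
  set f3 : ℝ → ℝ := fun z => ((6*z+2)*(z^3+z^2-1) - (3*z^2+2*z)^2)/(z^3+z^2-1)^2
      - ((-6*z)*(1+z-z^3) - (1-3*z^2)^2)/(1+z-z^3)^2 + c/z^2 with hf3def
  have hdom : ∀ z : ℝ, 1 ≤ z → z < θ → 0 < z ∧ 0 < z^3+z^2-1 ∧ 0 < 1+z-z^3 := by
    intro z h1 h2
    refine ⟨by linarith, by nlinarith, d_pos hθa hθc (by linarith) h2⟩
  have hD1 : ∀ z : ℝ, 1 ≤ z → z < θ → HasDerivAt f1 (f2 z) z := by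
    intro z h1 h2
    obtain ⟨a, b, d⟩ := hdom z h1 h2
    exact hasDeriv1 c z a b d
  have hD2 : ∀ z : ℝ, 1 ≤ z → z < θ → HasDerivAt f2 (f3 z) z := by
    intro z h1 h2
    obtain ⟨a, b, d⟩ := hdom z h1 h2
    exact hasDeriv2 c z a b d
  have hf11 : f1 1 = 0 := by
    simp [hf1def]
  -- Rolle on [1, x]
  obtain ⟨c₁, hc₁mem, hc₁⟩ := exists_hasDerivAt_eq_zero (f := f1) (f' := f2) hx1
    (fun z hz => (hD1 z hz.1 (lt_of_le_of_lt hz.2 (hxy.trans hyθ))).continuousAt.continuousWithinAt)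
    (hf11.trans hψx.symm)
    (fun z hz => hD1 z hz.1.le (lt_of_lt_of_le (lt_of_lt_of_le hz.2 (le_of_lt hxy)) hyθ.le))
  -- Rolle on [x, y]
  obtain ⟨c₂, hc₂mem, hc₂⟩ := exists_hasDerivAt_eq_zero (f := f1) (f' := f2) hxy
    (fun z hz => (hD1 z (hx1.le.trans hz.1) (lt_of_le_of_lt hz.2 hyθ)).continuousAt.continuousWithinAt)
    (show f1 x = f1 y from hψx.trans hψy.symm)
    (fun z hz => hD1 z (hx1.le.trans hz.1.le) (hz.2.trans hyθ))
  -- Rolle for f2 on [c₁, c₂]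
  have hc₁c₂ : c₁ < c₂ := hc₁mem.2.trans hc₂mem.1
  obtain ⟨c₃, hc₃mem, hc₃⟩ := exists_hasDerivAt_eq_zero (f := f2) (f' := f3) hc₁c₂
    (fun z hz => (hD2 z (hc₁mem.1.le.trans hz.1) ((hz.2.trans_lt hc₂mem.2).trans hyθ)).continuousAt.continuousWithinAt)
    (hc₁.trans hc₂.symm)
    (fun z hz => hD2 z (hc₁mem.1.le.trans hz.1.le) ((hz.2.trans hc₂mem.2).trans hyθ))
  have h1c₃ : 1 < c₃ := hc₁mem.1.trans hc₃mem.1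
  have hc₃θ : c₃ < θ := ((hc₃mem.2.trans hc₂mem.2).trans hyθ)
  have := psi2_pos hc h1c₃ (hc₃θ.trans hθb) (hdom c₃ h1c₃.le hc₃θ).2.2
  rw [hf3def] at hc₃
  simp only at hc₃
  linarith [hc₃ ▸ this]

theorem salem_sequence_to_smallest_pisot :
    ∃ θ₀ : ℝ, 1 < θ₀ ∧ θ₀ ^ 3 - θ₀ - 1 = 0 ∧
    ∃ N : ℕ, 4 ≤ N ∧ ∃ τ : ℕ → ℝ,
      (∀ s : ℕ, N ≤ s →
        1 < τ s ∧
        (1 - (τ s) ^ 2 - (τ s) ^ 3 + (τ s) ^ (s - 2) + (τ s) ^ (s - 1)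
          - (τ s) ^ (s + 1) = 0) ∧
        (∀ x : ℝ, 1 < x →
          1 - x ^ 2 - x ^ 3 + x ^ (s - 2) + x ^ (s - 1) - x ^ (s + 1) = 0 → x = τ s)) ∧
      Filter.Tendsto τ Filter.atTop (nhds θ₀) := by
  obtain ⟨θ₀, hθmem, hθroot⟩ : ∃ θ₀ ∈ Ioo (1.3:ℝ) 1.4, θ₀^3 - θ₀ - 1 = 0 := by
    have hcont : ContinuousOn (fun x : ℝ => x^3 - x - 1) (Icc 1.3 1.4) := by fun_prop
    have hIVT := intermediate_value_Ioo (by norm_num : (1.3:ℝ) ≤ 1.4) hcont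
    have h0 : (0:ℝ) ∈ Ioo ((1.3:ℝ)^3 - 1.3 - 1) ((1.4:ℝ)^3 - 1.4 - 1) := by
      constructor <;> norm_num
    obtain ⟨θ₀, hmem, heq⟩ := hIVT h0
    exact ⟨θ₀, hmem, heq⟩
  obtain ⟨hθa, hθb⟩ := hθmem
  have hθc : θ₀^3 = θ₀ + 1 := by linarith
  refine ⟨θ₀, by linarith, hθroot, 160, by norm_num, ?_⟩
  set g : ℕ → ℝ → ℝ := fun s x => x^(s-2)*(x^3-x-1) + (x^3+x^2-1) with hgdef
  have hfg : ∀ s : ℕ, 160 ≤ s → ∀ x : ℝ,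
      1 - x^2 - x^3 + x^(s-2) + x^(s-1) - x^(s+1) = -(g s x) := by
    intro s hs x
    have h1 : s-1 = (s-2)+1 := by omega
    have h3 : s+1 = (s-2)+3 := by omega
    rw [hgdef]
    simp only
    rw [h1, h3, pow_add, pow_add]
    ring
  have hloc : ∀ s : ℕ, ∀ x : ℝ, 1 < x → g s x = 0 → x < θ₀ := by
    intro s x hx hgx
    by_contra h
    push_neg at h
    have h1 : 0 ≤ x^3 - x - 1 := by
      nlinarith [mul_nonneg (sub_nonneg.mpr h)
        (show (0:ℝ) ≤ x^2 + x*θ₀ + θ₀^2 - 1 by nlinarith)]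
    have h3 : (0:ℝ) ≤ x^(s-2) := by positivity
    rw [hgdef] at hgx; simp only at hgx
    nlinarith [mul_nonneg h3 h1]
  have hψ : ∀ s : ℕ, 160 ≤ s → ∀ x : ℝ, 1 < x → x < θ₀ → g s x = 0 →
      Real.log (x^3+x^2-1) - Real.log (1+x-x^3) - ((s-2:ℕ):ℝ) * Real.log x = 0 := by
    intro s hs x hx1 hxθ hgx
    have hd : 0 < 1 + x - x^3 := d_pos hθa hθc (by linarith) hxθ
    rw [hgdef] at hgx; simp only at hgx
    have hmul : x^3+x^2-1 = x^(s-2) * (1+x-x^3) := by linear_combination hgx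
    rw [hmul, Real.log_mul (by positivity) hd.ne', Real.log_pow]
    ring
  have huniq : ∀ s : ℕ, 160 ≤ s → ∀ x y : ℝ, 1 < x → g s x = 0 → 1 < y → g s y = 0 → x = y := by
    intro s hs x y hx hgx hy hgy
    have hxθ := hloc s x hx hgx
    have hyθ := hloc s y hy hgy
    have hc : (158:ℝ) ≤ ((s-2:ℕ):ℝ) := by
      have : (158:ℕ) ≤ s - 2 := by omega
      exact_mod_cast this
    rcases lt_trichotomy x y with h | h | h
    · exact absurd (at_most_one hθa hθb hθc hc hx h hyθ
        (hψ s hs x hx hxθ hgx) (hψ s hs y hy hyθ hgy)) id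
    · exact h
    · exact absurd (at_most_one hθa hθb hθc hc hy h hxθ
        (hψ s hs y hy hyθ hgy) (hψ s hs x hx hxθ hgx)) id
  have hgθ : ∀ s : ℕ, g s θ₀ = θ₀^2 + θ₀ := by
    intro s
    rw [hgdef]
    simp only
    rw [show θ₀^3 - θ₀ - 1 = (0:ℝ) from hθroot, mul_zero, zero_add]
    linarith
  have hex : ∀ s : ℕ, 160 ≤ s → ∀ a : ℝ, 1 < a → a < θ₀ → g s a < 0 →
      ∃ x ∈ Ioo a θ₀, g s x = 0 := by
    intro s hs a ha1 haθ hga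
    have hcont : ContinuousOn (g s) (Icc a θ₀) := by
      apply Continuous.continuousOn
      rw [hgdef]
      fun_prop
    have hIVT := intermediate_value_Ioo haθ.le hcont
    have h0 : (0:ℝ) ∈ Ioo (g s a) (g s θ₀) := ⟨hga, by rw [hgθ s]; nlinarith⟩
    exact hIVT h0
  have hex13 : ∀ s : ℕ, 160 ≤ s → ∃ x, 1.3 < x ∧ x < θ₀ ∧ g s x = 0 := by
    intro s hs
    have hg13 : g s (1.3:ℝ) < 0 := by
      have h20 : (1.3:ℝ)^(20:ℕ) ≤ (1.3:ℝ)^(s-2) :=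
        pow_le_pow_right₀ (by norm_num) (by omega)
      have h29 : (29:ℝ) ≤ (1.3:ℝ)^(s-2) := le_trans (by norm_num) h20
      rw [hgdef]; simp only
      nlinarith [h29]
    obtain ⟨x, hmem, heq⟩ := hex s hs 1.3 (by norm_num) hθa hg13
    exact ⟨x, hmem.1, hmem.2, heq⟩
  choose! τ hτ1 hτ2 hτ3 using hex13
  refine ⟨τ, ?_, ?_⟩
  · intro s hs
    have h1 := hτ1 s hs
    have h2 := hτ2 s hs
    have h3 := hτ3 s hs
    refine ⟨by linarith, ?_, ?_⟩
    · rw [hfg s hs (τ s), h3, neg_zero]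
    · intro x hx hfx
      rw [hfg s hs x, neg_eq_zero] at hfx
      exact huniq s hs x (τ s) hx hfx (by linarith) h3
  · rw [Metric.tendsto_atTop]
    intro ε hε
    set a : ℝ := max 1.3 (θ₀ - ε/2) with hadef
    have ha1 : (1:ℝ) < a := lt_of_lt_of_le (by norm_num) (le_max_left _ _)
    have haθ : a < θ₀ := max_lt hθa (by linarith)
    have hda : 0 < 1 + a - a^3 := d_pos hθa hθc (by linarith) haθ
    have htend : Tendsto (fun s : ℕ => a ^ (s-2)) atTop atTop :=
      (tendsto_pow_atTop_atTop_of_one_lt ha1).comp (tendsto_sub_atTop_nat 2)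
    have hev := htend.eventually_gt_atTop ((a^3+a^2-1)/(1+a-a^3))
    rw [eventually_atTop] at hev
    obtain ⟨K₁, hK₁⟩ := hev
    refine ⟨max K₁ 160, ?_⟩
    intro s hsK
    have hs160 : 160 ≤ s := le_trans (le_max_right _ _) hsK
    have hga : g s a < 0 := by
      have h := hK₁ s (le_trans (le_max_left _ _) hsK)
      rw [div_lt_iff₀ hda] at h
      rw [hgdef]; simp only
      nlinarith [h]
    obtain ⟨x, hmem, heq⟩ := hex s hs160 a ha1 haθ hga
    have hxτ : x = τ s := huniq s hs160 x (τ s) (ha1.trans hmem.1) heq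
      (by linarith [hτ1 s hs160]) (hτ3 s hs160)
    have hτa : a < τ s := hxτ ▸ hmem.1
    have hτθ : τ s < θ₀ := hτ2 s hs160
    rw [Real.dist_eq, abs_lt]
    have haε : θ₀ - ε/2 ≤ a := le_max_right _ _
    constructor <;> linarith
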